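/- arXiv:1412.2268 — 6 statements merged into one kernel-verified Lean document; each statement's English description precedes it below -/
import Mathlib

section
/- Let $u(p) = \frac{C V_0^a \log_2(1 + p\alpha)}{(p + p_0)^a}$ on $[0,\infty)$, with $C, V_0, \alpha, p_0 > 0$ and $a > 1$, and let $\tilde p > 0$ be the unique zero of $f(p) = \frac{(p+p_0)\alpha}{1+p\alpha} - a\ln(1+p\alpha)$. Then $u$ is strictly increasing on $[0, \tilde p]$ and strictly decreasing on $[\tilde p, \infty)$; in particular $\tilde p$ is the unique global maximizer of $u$ on $(0,\infty)$. -/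
/-!
With `s = 1 + p α`, the quotient rule gives
`u' p = C V0 ^ a / log 2 * f p / (p + p0) ^ (a + 1)`, so `u'` has the sign of `f`.
The function `f` is strictly decreasing on `[0, ∞)`: for `0 ≤ p < q`, with `s < t` the
corresponding values of `1 + p α`, one has
`f p - f q = (t - s) (p0 α - 1) / (s t) + a log (t / s) ≥ (t - s) (p0 α - 1 + a s) / (s t) > 0`
by `log x ≥ 1 - 1 / x`, `s ≥ 1` and `a > 1`. Hence `f > 0` before its zero `p̃` and `f < 0`
after it, and `u` increases, then decreases.
-/

open Set Real

namespace Peukert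

noncomputable def utility (C V0 α p0 a p : ℝ) : ℝ :=
  C * V0 ^ a * logb 2 (1 + p * α) / (p + p0) ^ a

noncomputable def utilityDerivSign (α p0 a p : ℝ) : ℝ :=
  (p + p0) * α / (1 + p * α) - a * log (1 + p * α)

variable {C V0 α p0 a : ℝ}

theorem hasDerivAt_utility {p : ℝ} (hs : 0 < 1 + p * α) (hx : 0 < p + p0) :
    HasDerivAt (utility C V0 α p0 a)
      (C * V0 ^ a / log 2 * (utilityDerivSign α p0 a p / (p + p0) ^ (a + 1))) p := by
  have hlog : HasDerivAt (fun q => C * V0 ^ a / log 2 * log (1 + q * α))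
      (C * V0 ^ a / log 2 * (α / (1 + p * α))) p :=
    ((((hasDerivAt_id p).mul_const α).const_add 1).log hs.ne').const_mul _ |>.congr_deriv
      (by simp)
  have hpow : HasDerivAt (fun q => (q + p0) ^ a) (1 * a * (p + p0) ^ (a - 1)) p :=
    ((hasDerivAt_id p).add_const p0).rpow_const (Or.inl hx.ne')
  have hfun : utility C V0 α p0 a =
      fun q => C * V0 ^ a / log 2 * log (1 + q * α) / (q + p0) ^ a := by
    funext q
    simp only [utility, logb]
    ring
  rw [hfun]
  refine (hlog.div hpow (rpow_pos_of_pos hx a).ne').congr_deriv ?_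
  simp only [utilityDerivSign]
  rw [rpow_add_one hx.ne', rpow_sub_one hx.ne']
  field_simp

theorem hasDerivAt_utility_of_nonneg {p : ℝ} (hα : 0 ≤ α) (hp0 : 0 < p0) (hp : 0 ≤ p) :
    HasDerivAt (utility C V0 α p0 a)
      (C * V0 ^ a / log 2 * (utilityDerivSign α p0 a p / (p + p0) ^ (a + 1))) p :=
  hasDerivAt_utility (by positivity) (by positivity)

theorem strictAntiOn_utilityDerivSign (hα : 0 < α) (hp0 : 0 ≤ p0) (ha : 1 < a) :
    StrictAntiOn (utilityDerivSign α p0 a) (Ici 0) := by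
  intro p (hp : 0 ≤ p) q (hq : 0 ≤ q) hpq
  set s := 1 + p * α
  set t := 1 + q * α
  have hs : 1 ≤ s := by simp only [s]; nlinarith
  have hst : s < t := by simp only [s, t]; nlinarith
  have ht : 0 < t := by linarith
  have hlog : (t - s) / t ≤ log t - log s := by
    have := one_sub_inv_le_log_of_pos (div_pos ht (by linarith : 0 < s))
    rw [log_div ht.ne' (by positivity), inv_div] at this
    rwa [sub_div, div_self ht.ne']
  have hfrac : (p + p0) * α / s - (q + p0) * α / t = (t - s) * (p0 * α - 1) / (s * t) := by
    simp only [s, t]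
    field_simp
    ring
  have hkey : 0 < (t - s) * (p0 * α - 1) / (s * t) + a * ((t - s) / t) := by
    have hsum : (t - s) * (p0 * α - 1) / (s * t) + a * ((t - s) / t)
        = (t - s) * (p0 * α - 1 + a * s) / (s * t) := by
      field_simp
    rw [hsum]
    have : 0 < p0 * α - 1 + a * s := by nlinarith [mul_nonneg hp0 hα.le]
    have : 0 < t - s := by linarith
    positivity
  simp only [utilityDerivSign]
  nlinarith

theorem strictMonoOn_utility {s : Set ℝ} (hC : 0 < C) (hV0 : 0 < V0) (hα : 0 ≤ α)
    (hp0 : 0 < p0) (hconv : Convex ℝ s) (hs : s ⊆ Ici 0)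
    (hsign : ∀ p ∈ interior s, 0 < utilityDerivSign α p0 a p) :
    StrictMonoOn (utility C V0 α p0 a) s := by
  have hder (p) (hps : p ∈ s) :=
    hasDerivAt_utility_of_nonneg (C := C) (V0 := V0) (a := a) hα hp0 (hs hps)
  refine strictMonoOn_of_deriv_pos hconv
    (fun p hps => (hder p hps).continuousAt.continuousWithinAt) fun p hps => ?_
  have hp : 0 ≤ p := hs (interior_subset hps)
  rw [(hder p (interior_subset hps)).deriv]
  have := hsign p hps
  positivity

theorem strictAntiOn_utility {s : Set ℝ} (hC : 0 < C) (hV0 : 0 < V0) (hα : 0 ≤ α)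
    (hp0 : 0 < p0) (hconv : Convex ℝ s) (hs : s ⊆ Ici 0)
    (hsign : ∀ p ∈ interior s, utilityDerivSign α p0 a p < 0) :
    StrictAntiOn (utility C V0 α p0 a) s := by
  have hder (p) (hps : p ∈ s) :=
    hasDerivAt_utility_of_nonneg (C := C) (V0 := V0) (a := a) hα hp0 (hs hps)
  refine strictAntiOn_of_deriv_neg hconv
    (fun p hps => (hder p hps).continuousAt.continuousWithinAt) fun p hps => ?_
  have hp : 0 ≤ p := hs (interior_subset hps)
  rw [(hder p (interior_subset hps)).deriv]
  exact mul_neg_of_pos_of_neg (by positivity) (div_neg_of_neg_of_pos (hsign p hps) (by positivity))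

end Peukert

open Peukert in
theorem u_unimodal_general
    (C V0 α p0 a : ℝ) (hC : 0 < C) (hV0 : 0 < V0) (hα : 0 < α)
    (hp0 : 0 < p0) (ha : 1 < a)
    (u f : ℝ → ℝ)
    (hu : ∀ p, u p = C * V0 ^ a * Real.logb 2 (1 + p * α) / (p + p0) ^ a)
    (hf : ∀ p, f p = (p + p0) * α / (1 + p * α) - a * Real.log (1 + p * α))
    (pt : ℝ) (hpt : 0 < pt) (hfpt : f pt = 0) :
    StrictMonoOn u (Set.Icc 0 pt) ∧
    StrictAntiOn u (Set.Ici pt) ∧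
    (∀ p, 0 < p → p ≠ pt → u p < u pt) := by
  obtain rfl : u = utility C V0 α p0 a := funext hu
  obtain rfl : f = utilityDerivSign α p0 a := funext hf
  have hf_anti := strictAntiOn_utilityDerivSign hα hp0.le ha
  have hmono : StrictMonoOn (utility C V0 α p0 a) (Icc 0 pt) :=
    strictMonoOn_utility hC hV0 hα.le hp0 (convex_Icc 0 pt) (fun p hp => hp.1) fun p hp => by
      rw [interior_Icc] at hp
      exact hfpt ▸ hf_anti hp.1.le hpt.le hp.2
  have hanti : StrictAntiOn (utility C V0 α p0 a) (Ici pt) :=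
    strictAntiOn_utility hC hV0 hα.le hp0 (convex_Ici pt) (fun p hp => hpt.le.trans hp)
      fun p hp => by
        rw [interior_Ici] at hp
        exact hfpt ▸ hf_anti hpt.le (hpt.le.trans hp.le) hp
  refine ⟨hmono, hanti, fun p hp hne => ?_⟩
  rcases hne.lt_or_gt with h | h
  · exact hmono ⟨hp.le, h.le⟩ ⟨hpt.le, le_rfl⟩ h
  · exact hanti self_mem_Ici h.le h

/-- The utility `u` is strictly increasing on `[0, p̃]` and strictly decreasing
on `[p̃, ∞)`, where `p̃` is the unique positive zero of `f`; in particular `p̃`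
is the unique global maximizer of `u` on `(0,∞)`. -/
theorem u_unimodal
    (C V0 α p0 a : ℝ) (hC : 0 < C) (hV0 : 0 < V0) (hα : 0 < α)
    (hp0 : 0 < p0) (ha : 1 < a)
    (u f : ℝ → ℝ)
    (hu : ∀ p, u p = C * V0 ^ a * Real.logb 2 (1 + p * α) / (p + p0) ^ a)
    (hf : ∀ p, f p = (p + p0) * α / (1 + p * α) - a * Real.log (1 + p * α))
    (pt : ℝ) (hpt : 0 < pt) (hfpt : f pt = 0)
    (huniq : ∀ p, 0 < p → f p = 0 → p = pt) :
    StrictMonoOn u (Set.Icc 0 pt) ∧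
    StrictAntiOn u (Set.Ici pt) ∧
    (∀ p, 0 < p → p ≠ pt → u p < u pt) :=
  u_unimodal_general C V0 α p0 a hC hV0 hα hp0 ha u f hu hf pt hpt hfpt
end

section
/- Let $u(p) = \frac{C V_0^a \log_2(1 + p\alpha)}{(p + p_0)^a}$ on $[0, \bar p]$ with $C, V_0, \alpha, p_0, \bar p > 0$ and $a > 1$, and let $\tilde p$ denote the unique maximizer of $u$ on $(0,\infty)$. Then the constrained maximizer of $u$ over $[0,\bar p]$ is $\min(\tilde p, \bar p)$. -/
/-!
On `[0, ∞)` the derivative of `u` is a positive multiple of `f`, and `f` is strictly decreasing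
there, its derivative being `α((1 - a)(1 + pα) - (p + p₀)α)/(1 + pα)² < 0`. Hence `u` increases
on `[0, p̃]` and decreases on `[p̃, ∞)`, where `p̃` is the zero of `f`, and such a unimodal
function attains its maximum over `[0, p̄]` at `min p̃ p̄`.
-/

open Real Set

theorem le_apply_min_of_monotoneOn_of_antitoneOn {α β : Type*} [LinearOrder α] [Preorder β]
    {f : α → β} {lo m b : α} (hmono : MonotoneOn f (Icc lo m)) (hanti : AntitoneOn f (Ici m))
    (hlo : lo ≤ m) : ∀ x ∈ Icc lo b, f x ≤ f (min m b) := by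
  rintro x ⟨hlox, hxb⟩
  rcases le_total m b with hmb | hbm
  · rw [min_eq_left hmb]
    rcases le_total x m with hxm | hmx
    · exact hmono ⟨hlox, hxm⟩ ⟨hlo, le_rfl⟩ hxm
    · exact hanti le_rfl hmx hmx
  · rw [min_eq_right hbm]
    exact hmono ⟨hlox, hxb.trans hbm⟩ ⟨hlox.trans hxb, hbm⟩ hxb

namespace PowerControl

noncomputable def utility (K α p0 a p : ℝ) : ℝ :=
  K * logb 2 (1 + p * α) / (p + p0) ^ a

/-- The first-order condition: on `[0, ∞)` the derivative of `utility K α p0 a` is a positive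
multiple of it (see `hasDerivAt_utility`). -/
noncomputable def foc (α p0 a p : ℝ) : ℝ :=
  (p + p0) * α / (1 + p * α) - a * log (1 + p * α)

variable {K α p0 a x : ℝ}

theorem hasDerivAt_foc (hx : 1 + x * α ≠ 0) :
    HasDerivAt (foc α p0 a) (α * ((1 - a) * (1 + x * α) - (x + p0) * α) / (1 + x * α) ^ 2) x := by
  have hy : HasDerivAt (fun p ↦ 1 + p * α) α x := by
    simpa using ((hasDerivAt_id x).mul_const α).const_add 1
  have hq : HasDerivAt (fun p ↦ (p + p0) * α) (1 * α) x :=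
    ((hasDerivAt_id x).add_const p0).mul_const α
  refine ((hq.div hy hx).sub ((hy.log hx).const_mul a)).congr_deriv ?_
  field_simp
  ring

theorem strictAntiOn_foc (hα : 0 < α) (hp0 : 0 ≤ p0) (ha : 1 ≤ a) :
    StrictAntiOn (foc α p0 a) (Ici 0) := by
  have hy : ∀ x ∈ Ici (0 : ℝ), 0 < 1 + x * α := fun x hx ↦ by
    have : 0 ≤ x * α := mul_nonneg hx hα.le
    linarith
  refine strictAntiOn_of_hasDerivWithinAt_neg (convex_Ici 0)
    (fun x hx ↦ (hasDerivAt_foc (hy x hx).ne').continuousAt.continuousWithinAt)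
    (fun x hx ↦ (hasDerivAt_foc (hy x (interior_subset hx)).ne').hasDerivWithinAt) ?_
  intro x hx
  rw [interior_Ici] at hx
  have hx : 0 < x := hx
  have hyx := hy x hx.le
  apply div_neg_of_neg_of_pos _ (by positivity)
  apply mul_neg_of_pos_of_neg hα
  nlinarith

theorem hasDerivAt_utility (hy : 1 + x * α ≠ 0) (hq : 0 < x + p0) :
    HasDerivAt (utility K α p0 a)
      (K * (x + p0) ^ (a - 1) * foc α p0 a x / (log 2 * ((x + p0) ^ a) ^ 2)) x := by
  have hy' : HasDerivAt (fun p ↦ 1 + p * α) α x := by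
    simpa using ((hasDerivAt_id x).mul_const α).const_add 1
  have hN : HasDerivAt (fun p ↦ K * logb 2 (1 + p * α)) (K * (α / (1 + x * α) / log 2)) x :=
    ((hy'.log hy).div_const (log 2)).const_mul K
  have hD : HasDerivAt (fun p ↦ (p + p0) ^ a) (1 * a * (x + p0) ^ (a - 1)) x :=
    ((hasDerivAt_id x).add_const p0).rpow_const (Or.inl hq.ne')
  refine (hN.div hD (rpow_pos_of_pos hq a).ne').congr_deriv ?_
  have hsplit : (x + p0) ^ a = (x + p0) ^ (a - 1) * (x + p0) := by
    rw [← rpow_add_one hq.ne' (a - 1), sub_add_cancel]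
  rw [foc, logb, hsplit]
  field_simp

theorem differentiableOn_utility (hα : 0 ≤ α) (hp0 : 0 < p0) :
    DifferentiableOn ℝ (utility K α p0 a) (Ici 0) := fun x (hx : 0 ≤ x) ↦
  (hasDerivAt_utility (by nlinarith) (by linarith : 0 < x + p0)).differentiableAt
    |>.differentiableWithinAt

theorem exists_deriv_utility_eq_nonneg_mul_foc (hK : 0 ≤ K) (hα : 0 ≤ α) (hp0 : 0 < p0)
    (hx : 0 ≤ x) :
    ∃ c, 0 ≤ c ∧ deriv (utility K α p0 a) x = c * foc α p0 a x := by
  have hq : 0 < x + p0 := by linarith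
  refine ⟨K * (x + p0) ^ (a - 1) / (log 2 * ((x + p0) ^ a) ^ 2), by positivity, ?_⟩
  rw [(hasDerivAt_utility (by nlinarith) hq).deriv, div_mul_eq_mul_div]

variable {pt : ℝ}

theorem monotoneOn_utility (hK : 0 ≤ K) (hα : 0 < α) (hp0 : 0 < p0) (ha : 1 ≤ a)
    (hfpt : foc α p0 a pt = 0) : MonotoneOn (utility K α p0 a) (Icc 0 pt) := by
  have hsub : Icc 0 pt ⊆ Ici 0 := Icc_subset_Ici_self
  refine monotoneOn_of_deriv_nonneg (convex_Icc 0 pt)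
    ((differentiableOn_utility hα.le hp0).continuousOn.mono hsub)
    ((differentiableOn_utility hα.le hp0).mono (interior_subset.trans hsub)) fun x hx ↦ ?_
  rw [interior_Icc] at hx
  obtain ⟨c, hc, hderiv⟩ := exists_deriv_utility_eq_nonneg_mul_foc (a := a) hK hα.le hp0 hx.1.le
  have hfoc : foc α p0 a pt ≤ foc α p0 a x :=
    (strictAntiOn_foc hα hp0.le ha).antitoneOn hx.1.le (hx.1.trans hx.2).le hx.2.le
  rw [hderiv]
  exact mul_nonneg hc (hfpt ▸ hfoc)

theorem antitoneOn_utility (hK : 0 ≤ K) (hα : 0 < α) (hp0 : 0 < p0) (ha : 1 ≤ a)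
    (hpt : 0 ≤ pt) (hfpt : foc α p0 a pt = 0) : AntitoneOn (utility K α p0 a) (Ici pt) := by
  have hsub : Ici pt ⊆ Ici 0 := Ici_subset_Ici.mpr hpt
  refine antitoneOn_of_deriv_nonpos (convex_Ici pt)
    ((differentiableOn_utility hα.le hp0).continuousOn.mono hsub)
    ((differentiableOn_utility hα.le hp0).mono (interior_subset.trans hsub)) fun x hx ↦ ?_
  rw [interior_Ici] at hx
  have hx : pt < x := hx
  obtain ⟨c, hc, hderiv⟩ :=
    exists_deriv_utility_eq_nonneg_mul_foc (a := a) hK hα.le hp0 (hpt.trans hx.le)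
  have hfoc : foc α p0 a x ≤ foc α p0 a pt :=
    (strictAntiOn_foc hα hp0.le ha).antitoneOn hpt (hpt.trans hx.le) hx.le
  rw [hderiv]
  exact mul_nonpos_of_nonneg_of_nonpos hc (hfpt ▸ hfoc)

end PowerControl

theorem best_response_min_general
    (C V0 α p0 a pbar : ℝ) (hC : 0 < C) (hV0 : 0 < V0) (hα : 0 < α)
    (hp0 : 0 < p0) (ha : 1 < a)
    (u f : ℝ → ℝ)
    (hu : ∀ p, u p = C * V0 ^ a * Real.logb 2 (1 + p * α) / (p + p0) ^ a)
    (hf : ∀ p, f p = (p + p0) * α / (1 + p * α) - a * Real.log (1 + p * α))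
    (pt : ℝ) (hpt : 0 < pt) (hfpt : f pt = 0) :
    ∀ p ∈ Set.Icc (0 : ℝ) pbar, u p ≤ u (min pt pbar) := by
  obtain rfl : u = PowerControl.utility (C * V0 ^ a) α p0 a := funext hu
  obtain rfl : f = PowerControl.foc α p0 a := funext hf
  have hK : 0 ≤ C * V0 ^ a := by positivity
  exact le_apply_min_of_monotoneOn_of_antitoneOn
    (PowerControl.monotoneOn_utility hK hα hp0 ha.le hfpt)
    (PowerControl.antitoneOn_utility hK hα hp0 ha.le hpt.le hfpt) hpt.le

/-- The constrained maximizer of the utility `u` over `[0, p̄]` is `min(p̃, p̄)`,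
where `p̃` is the unique maximizer of `u` on `(0,∞)` (the unique positive zero of `f`). -/
theorem best_response_min
    (C V0 α p0 a pbar : ℝ) (hC : 0 < C) (hV0 : 0 < V0) (hα : 0 < α)
    (hp0 : 0 < p0) (ha : 1 < a) (hpbar : 0 < pbar)
    (u f : ℝ → ℝ)
    (hu : ∀ p, u p = C * V0 ^ a * Real.logb 2 (1 + p * α) / (p + p0) ^ a)
    (hf : ∀ p, f p = (p + p0) * α / (1 + p * α) - a * Real.log (1 + p * α))
    (pt : ℝ) (hpt : 0 < pt) (hfpt : f pt = 0)
    (hmax : ∀ p, 0 < p → p ≠ pt → u p < u pt) :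
    ∀ p ∈ Set.Icc (0 : ℝ) pbar, u p ≤ u (min pt pbar) :=
  best_response_min_general C V0 α p0 a pbar hC hV0 hα hp0 ha u f hu hf pt hpt hfpt
end

section
/- For each player $i$, the implicitly defined optimal power $\tilde p_i$ (the unique positive zero of $f_i(p) = \frac{(p+p_0)\alpha_i}{1+p\alpha_i} - a\ln(1+p\alpha_i)$, viewed as a function of the channel quality $\alpha_i > 0$) is strictly decreasing in $\alpha_i$: if $0 < \alpha < \alpha'$ and $\tilde p(\alpha), \tilde p(\alpha')$ are the corresponding zeros, then $\tilde p(\alpha') < \tilde p(\alpha)$. -/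
/-!
Put `u = p̃ α`. The zero equation `f_α(p̃) = 0` reads `p₀ = p̃ (a G(u) - 1)`, where
`G(u) = (1 + u) ln(1 + u) / u` is the slope of the secant of the strictly convex function
`x ln x` between `1` and `1 + u`; hence `G` is strictly increasing and `G > 1`.
Multiplying by `α` gives `p₀ α = u (a G(u) - 1)`, whose right side is strictly increasing in `u`,
so `α < α'` forces `u < u'`. Then `p̃ (a G(u) - 1) = p̃' (a G(u') - 1)` with
`a G(u) - 1 < a G(u') - 1`, so `p̃' < p̃`.
-/

open Real Set

lemma strictMonoOn_one_add_mul_log_one_add_div :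
    StrictMonoOn (fun u : ℝ => (1 + u) * log (1 + u) / u) (Ioi 0) := by
  intro u (hu : 0 < u) v (hv : 0 < v) huv
  have hsec := strictConvexOn_mul_log.secant_strict_mono (a := 1) (x := 1 + u) (y := 1 + v)
    (by simp) (by rw [mem_Ici]; linarith) (by rw [mem_Ici]; linarith)
    (by linarith) (by linarith) (by linarith)
  simpa using hsec

lemma one_lt_one_add_mul_log_one_add_div {u : ℝ} (hu : 0 < u) :
    1 < (1 + u) * log (1 + u) / u := by
  rw [one_lt_div hu]
  have hlog := log_lt_sub_one_of_pos (inv_pos.2 (by linarith : (0 : ℝ) < 1 + u))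
    (inv_ne_one.2 (by linarith))
  rw [log_inv] at hlog
  have h1u : (1 + u) * (1 + u)⁻¹ = 1 := mul_inv_cancel₀ (by linarith)
  nlinarith

lemma eq_mul_of_div_sub_mul_log_eq_zero {p0 a al p : ℝ} (hal : 0 < al) (hp : 0 < p)
    (h : (p + p0) * al / (1 + p * al) - a * log (1 + p * al) = 0) :
    p0 = p * (a * ((1 + p * al) * log (1 + p * al) / (p * al)) - 1) := by
  have hu : 0 < p * al := mul_pos hp hal
  rw [sub_eq_zero, div_eq_iff (by linarith)] at h
  field_simp
  linear_combination h

/-- The optimal power `p̃(α)` (the unique positive zero of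
`f_α(p) = (p+p₀)α/(1+pα) - a ln(1+pα)`) is strictly decreasing in the
channel quality `α`. -/
theorem opt_power_strictAnti_in_alpha
    (p0 a : ℝ) (hp0 : 0 < p0) (ha : 1 < a)
    (f : ℝ → ℝ → ℝ)
    (hf : ∀ al p, f al p = (p + p0) * al / (1 + p * al) - a * Real.log (1 + p * al))
    (al al' pt pt' : ℝ) (hal : 0 < al) (hal' : al < al')
    (hpt : 0 < pt) (hpt' : 0 < pt')
    (hz : f al pt = 0) (hz' : f al' pt' = 0) :
    pt' < pt := by
  set G : ℝ → ℝ := fun u => (1 + u) * log (1 + u) / u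
  have hG_mono : StrictMonoOn G (Ioi 0) := strictMonoOn_one_add_mul_log_one_add_div
  have hK_pos : ∀ u, 0 < u → 0 < a * G u - 1 := fun u hu => by
    nlinarith [one_lt_one_add_mul_log_one_add_div hu]
  have hu : 0 < pt * al := mul_pos hpt hal
  have hu' : 0 < pt' * al' := mul_pos hpt' (hal.trans hal')
  have he := eq_mul_of_div_sub_mul_log_eq_zero hal hpt ((hf _ _).symm.trans hz)
  have he' := eq_mul_of_div_sub_mul_log_eq_zero (hal.trans hal') hpt' ((hf _ _).symm.trans hz')
  have huu' : pt * al < pt' * al' := by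
    by_contra! h
    have hle : pt' * al' * (a * G (pt' * al') - 1) ≤ pt * al * (a * G (pt * al) - 1) :=
      mul_le_mul h (by gcongr; exact hG_mono.monotoneOn hu' hu h) (hK_pos _ hu').le hu.le
    have : p0 * al' < p0 * al' :=
      calc p0 * al' = pt' * al' * (a * G (pt' * al') - 1) := by rw [he']; ring
        _ ≤ pt * al * (a * G (pt * al) - 1) := hle
        _ = p0 * al := by rw [he]; ring
        _ < p0 * al' := by gcongr
    exact lt_irrefl _ this
  have hKK : a * G (pt * al) - 1 < a * G (pt' * al') - 1 := by
    gcongr; exact hG_mono hu hu' huu'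
  refine lt_of_mul_lt_mul_right ?_ (hK_pos _ hu').le
  calc pt' * (a * G (pt' * al') - 1) = pt * (a * G (pt * al) - 1) := he'.symm.trans he
    _ < pt * (a * G (pt' * al') - 1) := by gcongr
end

section
/- Suppose $p_0 \tilde p + (I - \sigma^2)/g > 0$, $\mu > 1$, $a > 1$, and let $f'(q) = \frac{(q + p_0)\alpha'}{1 + q\alpha'} - a\ln(1 + q\alpha')$ with $\alpha' = g/(\mu I + \sigma^2)$, $\alpha = g/(I + \sigma^2)$, where $\tilde p > 0$ satisfies $\frac{(\tilde p + p_0)\alpha}{1+\tilde p\alpha} = a\ln(1 + \tilde p\alpha)$. Then $f'(\mu\tilde p) < 0$. -/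
/-! Write `x = p̃α`, `x' = μp̃α'`, so that `f'(q) = (qα' + p₀α')/(1 + qα') - a ln(1 + qα')`.
Because `α' ≤ α < μα'`, passing from `(x, p₀α)` to `(x', p₀α')` raises the argument and lowers the
offset. The fractional term then grows by less than `(x' - x)/(1 + x')`, while the logarithmic term
grows by more than `a` times that amount; so `f'(μp̃)` lies strictly below the value `0` at `p̃`. -/

open Real

theorem Real.sub_div_lt_log_sub_log {u v : ℝ} (hu : 0 < u) (huv : u < v) :
    (v - u) / v < log v - log u := by
  have hv : 0 < v := hu.trans huv
  have h := log_lt_sub_one_of_pos (div_pos hu hv) (div_lt_one hv |>.mpr huv).ne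
  rw [log_div hu.ne' hv.ne'] at h
  have : u / v - 1 = -((v - u) / v) := by field_simp; ring
  linarith

noncomputable def efficiencySlope (a c x : ℝ) : ℝ :=
  (x + c) / (1 + x) - a * log (1 + x)

theorem efficiencySlope_mul (a p₀ q β : ℝ) :
    efficiencySlope a (p₀ * β) (q * β) = (q + p₀) * β / (1 + q * β) - a * log (1 + q * β) := by
  simp only [efficiencySlope, add_mul]

theorem efficiencySlope_lt {a c c' x x' : ℝ} (ha : 1 ≤ a) (hx : -1 < x) (hxc : 0 ≤ x + c)
    (hxx' : x < x') (hcc' : c' ≤ c) :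
    efficiencySlope a c' x' < efficiencySlope a c x := by
  have h1x : 0 < 1 + x := by linarith
  have h1x' : 0 < 1 + x' := by linarith
  have hfrac : (x + c') / (1 + x') ≤ (x + c) / (1 + x) :=
    div_le_div₀ hxc (by linarith) h1x (by linarith)
  have hlog : (x' - x) / (1 + x') < log (1 + x') - log (1 + x) := by
    simpa using Real.sub_div_lt_log_sub_log h1x (by linarith : 1 + x < 1 + x')
  have hlog_a : (x' - x) / (1 + x') < a * (log (1 + x') - log (1 + x)) :=
    hlog.trans_le (le_mul_of_one_le_left ((div_pos (by linarith) h1x').le.trans hlog.le) ha)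
  have hsplit : (x' + c') / (1 + x') = (x + c') / (1 + x') + (x' - x) / (1 + x') := by
    field_simp; ring
  unfold efficiencySlope
  linarith

theorem scalability_f_neg_general
    (μ pt p0 g σ2 I a α α' : ℝ)
    (hμ : 1 < μ) (hpt : 0 < pt) (hp0 : 0 < p0) (ha : 1 < a)
    (hg : 0 < g) (hσ : 0 < σ2) (hI : 0 ≤ I)
    (hα : α = g / (I + σ2)) (hα' : α' = g / (μ * I + σ2))
    (hzero : (pt + p0) * α / (1 + pt * α) = a * Real.log (1 + pt * α))
    (f' : ℝ → ℝ)
    (hf' : ∀ q, f' q = (q + p0) * α' / (1 + q * α') - a * Real.log (1 + q * α')) :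
    f' (μ * pt) < 0 := by
  have hden : I + σ2 ≤ μ * I + σ2 := by nlinarith
  have hαpos : 0 < α := by rw [hα]; positivity
  have hα'α : α' ≤ α := by rw [hα, hα']; exact div_le_div_of_nonneg_left hg.le (by linarith) hden
  have hαμα' : α < μ * α' := by
    rw [hα, hα', mul_div_assoc', div_lt_div_iff₀ (by linarith) (by linarith)]
    nlinarith [mul_pos (mul_pos hg hσ) (sub_pos.2 hμ)]
  have hslope₀ : efficiencySlope a (p0 * α) (pt * α) = 0 := by
    rw [efficiencySlope_mul, hzero, sub_self]
  rw [hf', ← efficiencySlope_mul, ← hslope₀]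
  refine efficiencySlope_lt ha.le (by nlinarith) (by positivity) ?_ ?_
  · nlinarith
  · exact mul_le_mul_of_nonneg_left hα'α hp0.le

/-- Scalability: under `p₀p̃ + (I-σ²)/g > 0`, `f'(μp̃) < 0`, where `f'` uses the
scaled channel quality `α' = g/(μI + σ²)` and `p̃` is the zero for `α = g/(I+σ²)`. -/
theorem scalability_f_neg
    (μ pt p0 g σ2 I a α α' : ℝ)
    (hμ : 1 < μ) (hpt : 0 < pt) (hp0 : 0 < p0) (ha : 1 < a)
    (hg : 0 < g) (hσ : 0 < σ2) (hI : 0 ≤ I)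
    (hα : α = g / (I + σ2)) (hα' : α' = g / (μ * I + σ2))
    (hcond : 0 < p0 * pt + (I - σ2) / g)
    (hzero : (pt + p0) * α / (1 + pt * α) = a * Real.log (1 + pt * α))
    (f' : ℝ → ℝ)
    (hf' : ∀ q, f' q = (q + p0) * α' / (1 + q * α') - a * Real.log (1 + q * α')) :
    f' (μ * pt) < 0 :=
  scalability_f_neg_general μ pt p0 g σ2 I a α α' hμ hpt hp0 ha hg hσ hI hα hα' hzero f' hf'
end

section
/- Let $\mathbf b : \mathbb{R}_{\ge 0}^N \to \mathbb{R}_{> 0}^N$ be a standard function, i.e., (i) $\mathbf b(\mathbf p) > 0$, (ii) $\mathbf p \ge \mathbf p' \Rightarrow \mathbf b(\mathbf p) \ge \mathbf b(\mathbf p')$, and (iii) for all $\mu > 1$, $\mu\,\mathbf b(\mathbf p) > \mathbf b(\mu\mathbf p)$ (componentwise). Then $\mathbf b$ has at most one fixed point. -/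
/-!
If `p` is a positive fixed point and `q` a fixed point with `q ≰ p`, let `μ > 1` be the largest
ratio `q k / p k`. Then `q ≤ μ p` with equality at `k`, and monotonicity followed by strict
scalability gives `q k = b q k ≤ b (μ p) k < μ b p k = μ p k = q k`. Fixed points are positive
because `b` is, so two of them are each below the other.
-/

theorem le_of_fixed_points_of_pos {ι : Type*} [Finite ι] {b : (ι → ℝ) → (ι → ℝ)}
    (hmono : ∀ p p' : ι → ℝ, (∀ i, 0 ≤ p i) → (∀ i, 0 ≤ p' i) →
      (∀ i, p' i ≤ p i) → ∀ i, b p' i ≤ b p i)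
    (hscal : ∀ μ : ℝ, 1 < μ → ∀ p : ι → ℝ, (∀ i, 0 ≤ p i) →
      ∀ i, b (fun j => μ * p j) i < μ * b p i)
    {p q : ι → ℝ} (hp : ∀ i, 0 < p i) (hq : ∀ i, 0 ≤ q i) (hfp : b p = p) (hfq : b q = q) :
    ∀ i, q i ≤ p i := by
  by_contra! ⟨i, hi⟩
  have : Nonempty ι := ⟨i⟩
  obtain ⟨k, hk⟩ := Finite.exists_max fun j => q j / p j
  set μ := q k / p k
  have hμ : 1 < μ := ((one_lt_div (hp i)).2 hi).trans_le (hk i)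
  have hq_le : ∀ j, q j ≤ μ * p j := fun j => (div_le_iff₀ (hp j)).1 (hk j)
  have hqk : μ * p k = q k := div_mul_cancel₀ _ (hp k).ne'
  have hμp : ∀ j, 0 ≤ μ * p j := fun j => mul_nonneg (by linarith) (hp j).le
  have : q k < q k :=
    calc q k = b q k := by rw [hfq]
      _ ≤ b (fun j => μ * p j) k := hmono _ _ hμp hq hq_le k
      _ < μ * b p k := hscal μ hμ p (fun j => (hp j).le) k
      _ = q k := by rw [hfp, hqk]
  exact lt_irrefl _ this

/-- A standard function (positive, monotone, scalable) has at most one fixed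
point on the nonnegative orthant. -/
theorem standard_function_unique_fixed_point
    (N : ℕ) (b : (Fin N → ℝ) → (Fin N → ℝ))
    (hpos : ∀ p : Fin N → ℝ, (∀ i, 0 ≤ p i) → ∀ i, 0 < b p i)
    (hmono : ∀ p p' : Fin N → ℝ, (∀ i, 0 ≤ p i) → (∀ i, 0 ≤ p' i) →
      (∀ i, p' i ≤ p i) → ∀ i, b p' i ≤ b p i)
    (hscal : ∀ μ : ℝ, 1 < μ → ∀ p : Fin N → ℝ, (∀ i, 0 ≤ p i) →
      ∀ i, b (fun j => μ * p j) i < μ * b p i) :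
    ∀ p q : Fin N → ℝ, (∀ i, 0 ≤ p i) → (∀ i, 0 ≤ q i) →
      b p = p → b q = q → p = q := by
  intro p q hp hq hfp hfq
  have fixed_pos : ∀ r, (∀ i, 0 ≤ r i) → b r = r → ∀ i, 0 < r i :=
    fun r hr hfr i => hfr ▸ hpos r hr i
  funext i
  exact le_antisymm
    (le_of_fixed_points_of_pos hmono hscal (fixed_pos q hq hfq) hp hfq hfp i)
    (le_of_fixed_points_of_pos hmono hscal (fixed_pos p hp hfp) hq hfp hfq i)
end

section
/- Let $u(p; \alpha) = \frac{C V_0^a \log_2(1+p\alpha)}{(p+p_0)^a}$ and let $p^*(\alpha) \in (0, \bar p]$ be the constrained maximizer $\min(\tilde p(\alpha), \bar p)$. Then the equilibrium utility $\alpha \mapsto u(p^*(\alpha); \alpha)$ is strictly increasing in the channel quality $\alpha > 0$. -/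
/-!
For fixed `α` the derivative of `p ↦ u(p; α)` is a positive multiple of `f(α, p)`, and `f(α, ·)` is
strictly decreasing on `[0, ∞)`: its derivative is `α (1 - p₀α - a(1 + pα)) / (1 + pα)² < 0` as
`a ≥ 1`. So `u(·; α)` increases up to its critical point `p̃(α)` and decreases after it, and
`p*(α) = min(p̃(α), p̄)` maximizes `u(·; α)` on `[0, p̄]`. For `α₁ < α₂` this gives
`u(p*(α₁); α₁) < u(p*(α₁); α₂) ≤ u(p*(α₂); α₂)`, the first step because `log₂(1 + pα)` grows
with `α`.
-/

open Real Set

theorem isMaxOn_Icc_min_of_hasDerivAt {g g' : ℝ → ℝ} {l c b : ℝ} (hc : l ≤ c)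
    (hg : ∀ x, l ≤ x → HasDerivAt g (g' x) x)
    (hpos : ∀ x, l < x → x < c → 0 ≤ g' x) (hneg : ∀ x, c < x → g' x ≤ 0) :
    IsMaxOn g (Icc l b) (min c b) := by
  have hcont : ContinuousOn g (Ici l) := fun x hx => (hg x hx).continuousAt.continuousWithinAt
  have hmono : MonotoneOn g (Icc l c) :=
    monotoneOn_of_hasDerivWithinAt_nonneg (convex_Icc l c) (hcont.mono Icc_subset_Ici_self)
      (fun x hx => by rw [interior_Icc] at hx; exact (hg x hx.1.le).hasDerivWithinAt)
      (fun x hx => by rw [interior_Icc] at hx; exact hpos x hx.1 hx.2)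
  have hanti : AntitoneOn g (Ici c) :=
    antitoneOn_of_hasDerivWithinAt_nonpos (convex_Ici c) (hcont.mono (Ici_subset_Ici.2 hc))
      (fun x hx => by rw [interior_Ici] at hx; exact (hg x (hc.trans hx.le)).hasDerivWithinAt)
      (fun x hx => by rw [interior_Ici] at hx; exact hneg x hx)
  intro x hx
  rcases le_total x c with hxc | hcx
  · exact hmono ⟨hx.1, hxc⟩ ⟨le_min hc (hx.1.trans hx.2), min_le_left c b⟩ (le_min hxc hx.2)
  · rw [min_eq_left (hcx.trans hx.2)]
    exact hanti self_mem_Ici hcx hcx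

/-- `u(p; α)` divided by the positive constant `C V₀^a / log 2`. -/
noncomputable def normalizedUtility (p0 a al p : ℝ) : ℝ :=
  log (1 + p * al) / (p + p0) ^ a

/-- The paper's `f(α, p)`. -/
noncomputable def marginalUtilityNumerator (p0 a al p : ℝ) : ℝ :=
  (p + p0) * al / (1 + p * al) - a * log (1 + p * al)

section

variable {p0 a al p : ℝ}

theorem hasDerivAt_log_one_add_mul (h : 0 < 1 + p * al) :
    HasDerivAt (fun q => log (1 + q * al)) (al / (1 + p * al)) p := by
  simpa using (((hasDerivAt_id p).mul_const al).const_add 1).log h.ne'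

theorem hasDerivAt_normalizedUtility (hp : 0 < p + p0) (h : 0 < 1 + p * al) :
    HasDerivAt (normalizedUtility p0 a al)
      (marginalUtilityNumerator p0 a al p / (p + p0) ^ (a + 1)) p := by
  have hpow : HasDerivAt (fun q => (q + p0) ^ a) (a * (p + p0) ^ (a - 1)) p := by
    simpa using ((hasDerivAt_id p).add_const p0).rpow_const (p := a) (Or.inl hp.ne')
  refine ((hasDerivAt_log_one_add_mul h).div hpow (by positivity)).congr_deriv ?_
  rw [marginalUtilityNumerator, rpow_add hp, rpow_sub hp, rpow_one]
  have : 0 < (p + p0) ^ a := by positivity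
  field_simp

theorem hasDerivAt_marginalUtilityNumerator (h : 0 < 1 + p * al) :
    HasDerivAt (marginalUtilityNumerator p0 a al)
      (al * (1 - p0 * al - a * (1 + p * al)) / (1 + p * al) ^ 2) p := by
  have hlin : HasDerivAt (fun q => 1 + q * al) al p := by
    simpa using ((hasDerivAt_id p).mul_const al).const_add 1
  have hfrac := (((hasDerivAt_id' p).add_const p0).mul_const al).div hlin h.ne'
  refine (hfrac.sub ((hasDerivAt_log_one_add_mul h).const_mul a)).congr_deriv ?_
  field_simp
  ring

theorem strictAntiOn_marginalUtilityNumerator (hp0 : 0 ≤ p0) (ha : 1 ≤ a) (hal : 0 < al) :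
    StrictAntiOn (marginalUtilityNumerator p0 a al) (Ici 0) := by
  have h1 : ∀ x : ℝ, 0 ≤ x → 0 < 1 + x * al := fun x hx => by nlinarith
  refine strictAntiOn_of_hasDerivWithinAt_neg (convex_Ici 0)
    (fun x hx => (hasDerivAt_marginalUtilityNumerator (h1 x hx)).continuousAt.continuousWithinAt)
    (fun x hx => (hasDerivAt_marginalUtilityNumerator (h1 x (interior_subset hx))).hasDerivWithinAt)
    (fun x hx => ?_)
  rw [interior_Ici] at hx
  have hneg : 1 - p0 * al - a * (1 + x * al) < 0 := by
    nlinarith [mul_pos (mul_pos hx hal) (zero_lt_one.trans_le ha), mul_nonneg hp0 hal.le]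
  exact div_neg_of_neg_of_pos (mul_neg_of_pos_of_neg hal hneg) (pow_pos (h1 x hx.le) 2)

theorem isMaxOn_normalizedUtility {c b : ℝ} (hp0 : 0 < p0) (ha : 1 ≤ a) (hal : 0 < al)
    (hc : 0 ≤ c) (hcrit : marginalUtilityNumerator p0 a al c = 0) :
    IsMaxOn (normalizedUtility p0 a al) (Icc 0 b) (min c b) := by
  have hanti := strictAntiOn_marginalUtilityNumerator hp0.le ha hal
  have hpow : ∀ x : ℝ, 0 ≤ x → 0 < (x + p0) ^ (a + 1) := fun x hx => by
    have : 0 < x + p0 := by linarith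
    positivity
  refine isMaxOn_Icc_min_of_hasDerivAt hc
    (fun x hx => hasDerivAt_normalizedUtility (by linarith) (by nlinarith))
    (fun x hx hxc => ?_) (fun x hcx => ?_)
  · have hsign := hanti (mem_Ici.2 hx.le) (mem_Ici.2 hc) hxc
    rw [hcrit] at hsign
    exact div_nonneg hsign.le (hpow x hx.le).le
  · have hsign := hanti (mem_Ici.2 hc) (mem_Ici.2 (hc.trans hcx.le)) hcx
    rw [hcrit] at hsign
    exact div_nonpos_of_nonpos_of_nonneg hsign.le (hpow x (hc.trans hcx.le)).le

theorem normalizedUtility_lt_of_lt {al₁ al₂ : ℝ} (hp : 0 < p) (hpp0 : 0 < p + p0)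
    (h1 : 0 < 1 + p * al₁) (h12 : al₁ < al₂) :
    normalizedUtility p0 a al₁ p < normalizedUtility p0 a al₂ p :=
  div_lt_div_of_pos_right (log_lt_log h1 (by nlinarith)) (rpow_pos_of_pos hpp0 a)

end

theorem equilibrium_utility_strictMono_in_alpha_general
    (C V0 p0 a pbar : ℝ) (hC : 0 < C) (hV0 : 0 < V0)
    (hp0 : 0 < p0) (ha : 1 < a) (hpbar : 0 < pbar)
    (u : ℝ → ℝ → ℝ)
    (hu : ∀ p al, u p al = C * V0 ^ a * Real.logb 2 (1 + p * al) / (p + p0) ^ a)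
    (f : ℝ → ℝ → ℝ)
    (hf : ∀ al p, f al p = (p + p0) * al / (1 + p * al) - a * Real.log (1 + p * al))
    (ptil : ℝ → ℝ)
    (hptil : ∀ al, 0 < al → 0 < ptil al ∧ f al (ptil al) = 0) :
    StrictMonoOn (fun al => u (min (ptil al) pbar) al) (Set.Ioi (0 : ℝ)) := by
  have hK : 0 < C * V0 ^ a / log 2 := by positivity
  have hu' : ∀ p al, u p al = C * V0 ^ a / log 2 * normalizedUtility p0 a al p := fun p al => by
    rw [hu, normalizedUtility, logb]
    ring
  intro a₁ ha₁ a₂ ha₂ h12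
  obtain ⟨hptil₁, -⟩ := hptil a₁ ha₁
  obtain ⟨hptil₂, hcrit₂⟩ := hptil a₂ ha₂
  rw [hf, ← marginalUtilityNumerator] at hcrit₂
  have hmax := isMaxOn_normalizedUtility (b := pbar) hp0 ha.le ha₂ hptil₂.le hcrit₂
  set p₁ := min (ptil a₁) pbar
  have hp₁ : 0 < p₁ := lt_min hptil₁ hpbar
  show u p₁ a₁ < u (min (ptil a₂) pbar) a₂
  rw [hu', hu']
  calc C * V0 ^ a / log 2 * normalizedUtility p0 a a₁ p₁
      < C * V0 ^ a / log 2 * normalizedUtility p0 a a₂ p₁ :=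
        mul_lt_mul_of_pos_left
          (normalizedUtility_lt_of_lt hp₁ (by linarith) (by nlinarith [mem_Ioi.1 ha₁]) h12) hK
    _ ≤ C * V0 ^ a / log 2 * normalizedUtility p0 a a₂ (min (ptil a₂) pbar) :=
        mul_le_mul_of_nonneg_left (hmax ⟨hp₁.le, min_le_right _ _⟩) hK.le

/-- The equilibrium utility `α ↦ u(p*(α); α)` with `p*(α) = min(p̃(α), p̄)` is
strictly increasing in the channel quality `α > 0`. -/
theorem equilibrium_utility_strictMono_in_alpha
    (C V0 p0 a pbar : ℝ) (hC : 0 < C) (hV0 : 0 < V0)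
    (hp0 : 0 < p0) (ha : 1 < a) (hpbar : 0 < pbar)
    (u : ℝ → ℝ → ℝ)
    (hu : ∀ p al, u p al = C * V0 ^ a * Real.logb 2 (1 + p * al) / (p + p0) ^ a)
    (f : ℝ → ℝ → ℝ)
    (hf : ∀ al p, f al p = (p + p0) * al / (1 + p * al) - a * Real.log (1 + p * al))
    (ptil : ℝ → ℝ)
    (hptil : ∀ al, 0 < al → 0 < ptil al ∧ f al (ptil al) = 0)
    (huniq : ∀ al, 0 < al → ∀ p, 0 < p → f al p = 0 → p = ptil al) :
    StrictMonoOn (fun al => u (min (ptil al) pbar) al) (Set.Ioi (0 : ℝ)) :=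
  equilibrium_utility_strictMono_in_alpha_general C V0 p0 a pbar hC hV0 hp0 ha hpbar u hu f hf ptil
    hptil
end
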